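/- arXiv:math-ph/0008040 — 2 statements merged into one kernel-verified Lean document; each statement's English description precedes it below -/
import Mathlib

section
/- The Fredholm index is locally constant: if F is Fredholm and B is bounded, then for all sufficiently small ε > 0, F + εB is Fredholm with Index(F + εB) = Index(F). -/
open ContinuousLinearMap

/-- A bounded operator on a (complex) Hilbert space is *Fredholm* if there exists a
bounded operator `B` such that `1 - F * B` and `1 - B * F` are compact. -/
def IsFredholm {H : Type*} [NormedAddCommGroup H] [InnerProductSpace ℂ H]
    (F : H →L[ℂ] H) : Prop :=
  ∃ B : H →L[ℂ] H,
    IsCompactOperator (⇑(1 - F * B)) ∧ IsCompactOperator (⇑(1 - B * F))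

/-- The Fredholm index `Index F = dim Ker F - dim Ker F†`. -/
noncomputable def fredholmIndex {H : Type*} [NormedAddCommGroup H]
    [InnerProductSpace ℂ H] [CompleteSpace H] (F : H →L[ℂ] H) : ℤ :=
  (Module.finrank ℂ (LinearMap.ker (F : H →ₗ[ℂ] H)) : ℤ) -
    (Module.finrank ℂ (LinearMap.ker (ContinuousLinearMap.adjoint F : H →ₗ[ℂ] H)) : ℤ)

open Submodule Module Filter Topology
open scoped InnerProduct

/-!
A parametrix `B` of `F` shows that `ker F` and `(range F)ᗮ` are finite dimensional (a compact
operator acts as the identity on each) and that `F` is bounded below on `(ker F)ᗮ`, so `range F`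
is closed and the compression of `F` from `(ker F)ᗮ` to `range F` is invertible. Invertibility
is an open condition, so the same compression of every `G` near `F` is invertible, and then the
kernels of `G` and `G†` are identified with those of the Schur complement of that block, an
operator `ker F → (range F)ᗮ` between finite-dimensional spaces. Rank–nullity gives
`Index G = dim ker F - dim (range F)ᗮ = Index F`. Fredholmness persists because
`G B = (1 + (G - F) B) - (1 - F B)` with the first term a unit for `G` near `F`.
-/

section CompactPerturbationOfIdentity

theorem FiniteDimensional.of_isCompactOperator_eqOn {𝕜 E : Type*} [NontriviallyNormedField 𝕜]
    [CompleteSpace 𝕜] [NormedAddCommGroup E] [NormedSpace 𝕜 E] {K : E →L[𝕜] E}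
    (hK : IsCompactOperator K) {V : Submodule 𝕜 E} (hV : IsClosed (V : Set E))
    (hKV : ∀ v ∈ V, K v = v) : FiniteDimensional 𝕜 V := by
  have hmaps : ∀ v ∈ V, (K : E →ₗ[𝕜] E) v ∈ V := fun v hv => (hKV v hv).symm ▸ hv
  have hid : ((K : E →ₗ[𝕜] E).restrict hmaps : V → V) = id :=
    funext fun v => Subtype.ext (hKV v v.2)
  exact .of_isCompactOperator_id (hid ▸ hK.restrict hmaps hV)

variable {𝕜 E : Type*} [RCLike 𝕜] [NormedAddCommGroup E] [NormedSpace 𝕜 E] {F B : E →L[𝕜] E}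

theorem exists_tendsto_subseq_of_tendsto_apply (hK : IsCompactOperator ⇑(1 - B * F))
    {x : ℕ → E} (hx : ∀ n, ‖x n‖ ≤ 1) (hFx : Tendsto (F ∘ x) atTop (𝓝 0)) :
    ∃ a, ∃ φ : ℕ → ℕ, StrictMono φ ∧ Tendsto (x ∘ φ) atTop (𝓝 a) := by
  obtain ⟨M, hM, hKM⟩ := hK.image_closedBall_subset_compact 1
  obtain ⟨a, -, φ, hφ, ha⟩ := hM.tendsto_subseq (x := fun n => (1 - B * F) (x n))
    fun n => hKM ⟨x n, by simpa using hx n, rfl⟩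
  have hBF : Tendsto (fun n => B (F (x (φ n)))) atTop (𝓝 0) := by
    simpa [Function.comp_def] using
      (B.continuous.tendsto 0).comp (hFx.comp hφ.tendsto_atTop)
  exact ⟨a, φ, hφ, by simpa [Function.comp_def] using hBF.add ha⟩

theorem exists_norm_le_mul_norm_apply (hK : IsCompactOperator ⇑(1 - B * F)) {V : Submodule 𝕜 E}
    (hV : IsClosed (V : Set E)) (hVF : ∀ v ∈ V, F v = 0 → v = 0) :
    ∃ C : NNReal, ∀ v ∈ V, ‖v‖ ≤ C * ‖F v‖ := by
  by_contra! h
  have hseq : ∀ n : ℕ, ∃ x ∈ V, ‖x‖ = 1 ∧ ‖F x‖ ≤ 1 / (n + 1) := by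
    intro n
    obtain ⟨v, hv, hlt⟩ := h (n + 1)
    have hv0 : v ≠ 0 := by rintro rfl; simp at hlt
    refine ⟨(‖v‖⁻¹ : 𝕜) • v, V.smul_mem _ hv, norm_smul_inv_norm hv0, ?_⟩
    rw [map_smul, norm_smul, norm_inv, RCLike.norm_ofReal, abs_norm,
      inv_mul_le_iff₀ (norm_pos_iff.2 hv0), mul_one_div, le_div_iff₀ (by positivity)]
    push_cast at hlt
    linarith
  choose x hxV hx1 hFx using hseq
  have hF0 : Tendsto (F ∘ x) atTop (𝓝 0) :=
    squeeze_zero_norm hFx tendsto_one_div_add_atTop_nhds_zero_nat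
  obtain ⟨a, φ, hφ, ha⟩ := exists_tendsto_subseq_of_tendsto_apply hK (fun n => (hx1 n).le) hF0
  have haV : a ∈ V := hV.mem_of_tendsto ha (Eventually.of_forall fun n => hxV _)
  have ha1 : ‖a‖ = 1 := tendsto_nhds_unique ha.norm (by simp [hx1])
  have hFa : F a = 0 :=
    tendsto_nhds_unique ((F.continuous.tendsto a).comp ha) (hF0.comp hφ.tendsto_atTop)
  simp [hVF a haV hFa] at ha1

end CompactPerturbationOfIdentity

theorem range_comp_subtypeL_orthogonal_ker {𝕜 E F : Type*} [RCLike 𝕜] [NormedAddCommGroup E]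
    [InnerProductSpace 𝕜 E] [NormedAddCommGroup F] [NormedSpace 𝕜 F] (T : E →L[𝕜] F)
    [T.ker.HasOrthogonalProjection] : (T ∘L T.kerᗮ.subtypeL).range = T.range := by
  refine le_antisymm (LinearMap.range_comp_le_range _ _) ?_
  rintro _ ⟨x, rfl⟩
  refine ⟨⟨x - T.ker.starProjection x, sub_starProjection_mem_orthogonal x⟩, ?_⟩
  simp [show T (T.ker.starProjection x) = 0 from (T.ker.orthogonalProjectionOnto x).2]

section Adjoint

variable {𝕜 E F : Type*} [RCLike 𝕜] [NormedAddCommGroup E] [InnerProductSpace 𝕜 E]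
  [CompleteSpace E] [NormedAddCommGroup F] [InnerProductSpace 𝕜 F] [CompleteSpace F]
  {f : E →L[𝕜] F}

theorem ContinuousLinearMap.IsInvertible.adjoint (hf : f.IsInvertible) : f†.IsInvertible :=
  .of_inverse (g := f.inverse†) (by rw [← adjoint_comp, hf.inverse_comp_self, adjoint_id])
    (by rw [← adjoint_comp, hf.self_comp_inverse, adjoint_id])

theorem ContinuousLinearMap.IsInvertible.inverse_adjoint (hf : f.IsInvertible) :
    f†.inverse = f.inverse† :=
  inverse_eq (by rw [← adjoint_comp, hf.inverse_comp_self, adjoint_id])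
    (by rw [← adjoint_comp, hf.self_comp_inverse, adjoint_id])

theorem finrank_ker_sub_finrank_ker_adjoint [FiniteDimensional 𝕜 E] [FiniteDimensional 𝕜 F]
    (S : E →L[𝕜] F) :
    (finrank 𝕜 S.ker : ℤ) - finrank 𝕜 (S†).ker = finrank 𝕜 E - finrank 𝕜 F := by
  have h₁ := LinearMap.finrank_range_add_finrank_ker (S : E →ₗ[𝕜] F)
  have h₂ := S.range.finrank_add_finrank_orthogonal
  rw [S.orthogonal_range] at h₂
  omega

end Adjoint

section Compression

variable {𝕜 H : Type*} [RCLike 𝕜] [NormedAddCommGroup H] [InnerProductSpace 𝕜 H]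

noncomputable def compression (V W : Submodule 𝕜 H) [W.HasOrthogonalProjection]
    (A : H →L[𝕜] H) : V →L[𝕜] W :=
  W.orthogonalProjectionOnto ∘L A ∘L V.subtypeL

theorem eq_zero_iff_orthogonalProjectionOnto_eq_zero (R : Submodule 𝕜 H)
    [R.HasOrthogonalProjection] {y : H} :
    y = 0 ↔ R.orthogonalProjectionOnto y = 0 ∧ Rᗮ.orthogonalProjectionOnto y = 0 := by
  rw [orthogonalProjectionOnto_eq_zero_iff, orthogonalProjectionOnto_eq_zero_iff,
    orthogonal_orthogonal, ← Submodule.mem_inf, inf_comm, inf_orthogonal_eq_bot,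
    Submodule.mem_bot]

/-- The Schur complement of the block `compression M R A` in the block decomposition of `A`
from `N ⊕ M` to `R ⊕ W`. -/
noncomputable def schurComplement (N M R W : Submodule 𝕜 H) [R.HasOrthogonalProjection]
    [W.HasOrthogonalProjection] (A : H →L[𝕜] H) : N →L[𝕜] W :=
  compression N W A - compression M W A ∘L (compression M R A).inverse ∘L compression N R A

theorem apply_add_eq_zero_iff (N R : Submodule 𝕜 H) [R.HasOrthogonalProjection]
    (A : H →L[𝕜] H) (hA : (compression Nᗮ R A).IsInvertible) (n : N) (m : Nᗮ) :
    A (n + m) = 0 ↔ m = -(compression Nᗮ R A).inverse (compression N R A n) ∧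
      schurComplement N Nᗮ R Rᗮ A n = 0 := by
  have hm : compression N R A n + compression Nᗮ R A m = 0 ↔
      m = -(compression Nᗮ R A).inverse (compression N R A n) := by
    rw [← neg_eq_iff_eq_neg, eq_comm (a := -m), hA.inverse_apply_eq, map_neg,
      eq_neg_iff_add_eq_zero]
  rw [eq_zero_iff_orthogonalProjectionOnto_eq_zero R, map_add, map_add, map_add]
  change compression N R A n + compression Nᗮ R A m = 0 ∧
    compression N Rᗮ A n + compression Nᗮ Rᗮ A m = 0 ↔ _
  refine (and_congr hm Iff.rfl).trans (and_congr_right fun h => ?_)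
  rw [h, map_neg, ← sub_eq_add_neg]
  rfl

-- `M` and `W` stand for `Nᗮ` and `Rᗮ` so that the lemma also applies to `A†`, for which the
-- complements are `Rᗮᗮ = R` and `Nᗮᗮ = N`, equal only propositionally.
theorem finrank_ker_eq_finrank_ker_schurComplement (N M R W : Submodule 𝕜 H)
    [N.HasOrthogonalProjection] [R.HasOrthogonalProjection] [W.HasOrthogonalProjection]
    (hM : Nᗮ = M) (hW : Rᗮ = W) (A : H →L[𝕜] H) (hA : (compression M R A).IsInvertible) :
    finrank 𝕜 A.ker = finrank 𝕜 (schurComplement N M R W A).ker := by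
  subst hM hW
  -- every `x ∈ ker A` is `J` of its `N`-component
  let J : N →L[𝕜] H :=
    N.subtypeL - Nᗮ.subtypeL ∘L (compression Nᗮ R A).inverse ∘L compression N R A
  have hJ : Function.Injective J := fun n n' h => by
    simpa [J, orthogonalProjectionOnto_apply_of_mem_orthogonal, SetLike.coe_mem] using
      congrArg N.orthogonalProjectionOnto h
  have hker : A.ker = (schurComplement N Nᗮ R Rᗮ A).ker.map (J : N →ₗ[𝕜] H) := by
    ext x
    constructor
    · intro hx
      have hx' : (N.orthogonalProjectionOnto x : H) + Nᗮ.orthogonalProjectionOnto x = x := by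
        simp
      obtain ⟨hm, hn⟩ := (apply_add_eq_zero_iff N R A hA _ _).1 (hx'.symm ▸ hx)
      rw [hm] at hx'
      exact ⟨_, hn, by simpa [J, sub_eq_add_neg] using hx'⟩
    · rintro ⟨n, hn, rfl⟩
      have := (apply_add_eq_zero_iff N R A hA n _).2 ⟨rfl, hn⟩
      show A (J n) = 0
      simpa [J, sub_eq_add_neg] using this
  rw [hker]
  exact (LinearEquiv.finrank_eq (Submodule.equivMapOfInjective _ hJ _)).symm

variable [CompleteSpace H]

theorem adjoint_compression (V W : Submodule 𝕜 H) [CompleteSpace V] [CompleteSpace W]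
    (A : H →L[𝕜] H) : (compression V W A)† = compression W V (A†) := by
  simp only [compression, adjoint_comp, adjoint_subtypeL, adjoint_orthogonalProjectionOnto,
    comp_assoc]

theorem adjoint_schurComplement (N R : Submodule 𝕜 H) [CompleteSpace N] [CompleteSpace R]
    (A : H →L[𝕜] H) (hA : (compression Nᗮ R A).IsInvertible) :
    (schurComplement N Nᗮ R Rᗮ A)† = schurComplement Rᗮ R Nᗮ N (A†) := by
  rw [schurComplement, schurComplement, ← adjoint_compression Nᗮ R, hA.inverse_adjoint]
  simp only [map_sub, adjoint_comp, adjoint_compression, comp_assoc]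

theorem isInvertible_compression_orthogonal_ker_range (T : H →L[𝕜] H) [CompleteSpace T.range] :
    (compression T.kerᗮ T.range T).IsInvertible := by
  have happly (x : T.kerᗮ) : (compression T.kerᗮ T.range T x : H) = T x :=
    starProjection_eq_self_iff.2 ⟨x, rfl⟩
  have hinj : (compression T.kerᗮ T.range T).ker = ⊥ := by
    refine LinearMap.ker_eq_bot'.2 fun x hx => Subtype.ext ?_
    have hTx : T x = 0 := by simpa [← happly] using congrArg Subtype.val hx
    exact disjoint_def.1 T.ker.orthogonal_disjoint x hTx x.2
  have hsurj : (compression T.kerᗮ T.range T).range = ⊤ := by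
    refine LinearMap.range_eq_top.2 fun ⟨y, hy⟩ => ?_
    rw [← range_comp_subtypeL_orthogonal_ker] at hy
    obtain ⟨x, rfl⟩ := hy
    exact ⟨x, Subtype.ext (happly x)⟩
  exact ⟨.ofBijective _ hinj hsurj, rfl⟩

end Compression

theorem fredholmIndex_eq_of_isInvertible_compression {H : Type*} [NormedAddCommGroup H]
    [InnerProductSpace ℂ H] [CompleteSpace H] (N R : Submodule ℂ H) [FiniteDimensional ℂ N]
    [CompleteSpace R] [FiniteDimensional ℂ Rᗮ] (A : H →L[ℂ] H)
    (hA : (compression Nᗮ R A).IsInvertible) :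
    fredholmIndex A = finrank ℂ N - finrank ℂ Rᗮ := by
  have hA' : (compression R Nᗮ (A†)).IsInvertible :=
    adjoint_compression Nᗮ R A ▸ hA.adjoint
  rw [fredholmIndex, finrank_ker_eq_finrank_ker_schurComplement N Nᗮ R Rᗮ rfl rfl A hA,
    finrank_ker_eq_finrank_ker_schurComplement Rᗮ R Nᗮ N R.orthogonal_orthogonal
      N.orthogonal_orthogonal (A†) hA', ← adjoint_schurComplement N R A hA]
  exact finrank_ker_sub_finrank_ker_adjoint _

section Fredholm

variable {H : Type*} [NormedAddCommGroup H] [InnerProductSpace ℂ H] {F : H →L[ℂ] H}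

theorem isFredholm_of_isCompactOperator_one_sub_mul {G L R : H →L[ℂ] H}
    (hL : IsCompactOperator ⇑(1 - L * G)) (hR : IsCompactOperator ⇑(1 - G * R)) :
    _root_.IsFredholm G := by
  refine ⟨R, hR, ?_⟩
  -- a left and a right inverse modulo compact operators agree modulo compact operators
  have h : 1 - R * G = (1 - L * G) - (1 - L * G) * R * G + L * (1 - G * R) * G := by
    noncomm_ring
  rw [h]
  exact (hL.sub ((hL.comp_clm R).comp_clm G)).add ((hR.clm_comp L).comp_clm G)

theorem IsFredholm.finiteDimensional_ker (hF : _root_.IsFredholm F) :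
    FiniteDimensional ℂ F.ker := by
  obtain ⟨B, -, hK⟩ := hF
  exact .of_isCompactOperator_eqOn hK F.isClosed_ker fun x (hx : F x = 0) => by simp [hx]

variable [CompleteSpace H]

theorem IsFredholm.finiteDimensional_orthogonal_range (hF : _root_.IsFredholm F) :
    FiniteDimensional ℂ F.rangeᗮ := by
  obtain ⟨B, hK, -⟩ := hF
  refine .of_isCompactOperator_eqOn (K := F.rangeᗮ.starProjection * (1 - F * B))
    (hK.clm_comp F.rangeᗮ.starProjection) F.range.isClosed_orthogonal fun y hy => ?_
  have hFB : F.rangeᗮ.starProjection (F (B y)) = 0 :=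
    (starProjection_apply_eq_zero_iff _).2 (F.range.le_orthogonal_orthogonal ⟨B y, rfl⟩)
  simp [hFB, starProjection_eq_self_iff.2 hy]

theorem IsFredholm.isClosed_range (hF : _root_.IsFredholm F) : IsClosed (F.range : Set H) := by
  obtain ⟨B, -, hK⟩ := hF
  obtain ⟨C, hC⟩ := exists_norm_le_mul_norm_apply hK F.ker.isClosed_orthogonal
    fun v hv hFv => disjoint_def.1 F.ker.orthogonal_disjoint v hFv hv
  have hanti : AntilipschitzWith C (F ∘L F.kerᗮ.subtypeL) :=
    antilipschitz_of_bound _ fun v => hC v v.2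
  rw [← range_comp_subtypeL_orthogonal_ker, LinearMap.coe_range]
  exact hanti.isClosed_range (F ∘L F.kerᗮ.subtypeL).uniformContinuous

theorem IsFredholm.eventually_fredholmIndex_eq (hF : _root_.IsFredholm F) :
    ∀ᶠ G in 𝓝 F, fredholmIndex G = fredholmIndex F := by
  have := hF.finiteDimensional_ker
  have := hF.finiteDimensional_orthogonal_range
  have : CompleteSpace F.range := hF.isClosed_range.completeSpace_coe
  obtain ⟨e, he⟩ := isInvertible_compression_orthogonal_ker_range F
  have hcont : Continuous fun G : H →L[ℂ] H => compression F.kerᗮ F.range G := by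
    unfold compression; fun_prop
  filter_upwards [hcont.continuousAt.eventually_mem (he ▸ ContinuousLinearEquiv.nhds e)]
    with G ⟨e', he'⟩
  rw [fredholmIndex_eq_of_isInvertible_compression _ _ G ⟨e', he'⟩,
    fredholmIndex_eq_of_isInvertible_compression _ _ F ⟨e, he⟩]

theorem IsFredholm.eventually_isFredholm (hF : _root_.IsFredholm F) :
    ∀ᶠ G in 𝓝 F, _root_.IsFredholm G := by
  obtain ⟨B, hK₁, hK₂⟩ := hF
  have hunit (g : (H →L[ℂ] H) → H →L[ℂ] H) (hg : Continuous g) (h1 : g F = 1) :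
      ∀ᶠ G in 𝓝 F, IsUnit (g G) :=
    hg.continuousAt.eventually_mem (Units.isOpen.mem_nhds (h1 ▸ isUnit_one))
  filter_upwards [hunit (fun G => 1 + (G - F) * B) (by fun_prop) (by simp),
    hunit (fun G => 1 + B * (G - F)) (by fun_prop) (by simp)] with G ⟨u, hu⟩ ⟨u', hu'⟩
  refine isFredholm_of_isCompactOperator_one_sub_mul (L := ↑u'⁻¹ * B) (R := B * ↑u⁻¹) ?_ ?_
  · have h : 1 - ↑u'⁻¹ * B * G = ↑u'⁻¹ * (1 - B * F) := by
      rw [show 1 - B * F = ↑u' - B * G by rw [hu']; noncomm_ring, mul_sub, ← mul_assoc,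
        u'.inv_mul]
    rw [h]
    exact hK₂.clm_comp (↑u'⁻¹ : H →L[ℂ] H)
  · have h : 1 - G * (B * ↑u⁻¹) = (1 - F * B) * ↑u⁻¹ := by
      rw [show 1 - F * B = ↑u - G * B by rw [hu]; noncomm_ring, sub_mul, mul_assoc,
        u.mul_inv]
    rw [h]
    exact hK₁.comp_clm (↑u⁻¹ : H →L[ℂ] H)

end Fredholm

theorem isFredholm_small_perturbation_general {H : Type*} [NormedAddCommGroup H]
    [InnerProductSpace ℂ H] [CompleteSpace H]
    (F B : H →L[ℂ] H) (hF : _root_.IsFredholm F) :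
    ∃ ε₀ > 0, ∀ ε : ℝ, 0 < ε → ε < ε₀ →
      _root_.IsFredholm (F + (ε : ℂ) • B) ∧ fredholmIndex (F + (ε : ℂ) • B) = fredholmIndex F := by
  have hpath : Tendsto (fun ε : ℝ => F + (ε : ℂ) • B) (𝓝 0) (𝓝 F) := by
    have : Continuous fun ε : ℝ => F + (ε : ℂ) • B := by fun_prop
    simpa using this.tendsto 0
  obtain ⟨ε₀, hε₀, h⟩ := Metric.eventually_nhds_iff.1
    (hpath.eventually (hF.eventually_isFredholm.and hF.eventually_fredholmIndex_eq))
  exact ⟨ε₀, hε₀, fun ε hε hεε₀ => h (by rwa [Real.dist_eq, sub_zero, abs_of_pos hε])⟩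

/-- The Fredholm index is locally constant: for `F` Fredholm and `B`
bounded, `F + εB` is Fredholm with the same index for all sufficiently small `ε > 0`. -/
theorem isFredholm_small_perturbation {H : Type*} [NormedAddCommGroup H]
    [InnerProductSpace ℂ H] [CompleteSpace H] [TopologicalSpace.SeparableSpace H]
    (F B : H →L[ℂ] H) (hF : _root_.IsFredholm F) :
    ∃ ε₀ > 0, ∀ ε : ℝ, 0 < ε → ε < ε₀ →
      _root_.IsFredholm (F + (ε : ℂ) • B) ∧ fredholmIndex (F + (ε : ℂ) • B) = fredholmIndex F :=
  isFredholm_small_perturbation_general F B hF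
end

section
/- If a complex polynomial p of degree ≤ n has some root on the unit circle, then the operator A = p(a) (where a is the unilateral shift) is not Fredholm. -/
open ContinuousLinearMap

/-- `ℓ²(ℕ)`. -/
noncomputable abbrev ℓ2 : Type := lp (fun _ : ℕ => ℂ) 2

/-- The canonical orthonormal basis vectors of `ℓ²(ℕ)`. -/
noncomputable def e (n : ℕ) : ℓ2 := lp.single 2 n 1

/-- `a` is the unilateral (left) shift: `a e₀ = 0` and `a eₙ = eₙ₋₁` for `n > 0`. -/
def IsUnilateralShift (a : ℓ2 →L[ℂ] ℓ2) : Prop :=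
  a (e 0) = 0 ∧ ∀ n : ℕ, a (e (n + 1)) = e n

/-!
Write `p = (X - z) q` with `|z| = 1`. A Fredholm regulariser `B` of `p(a)` makes `B q(a)` a left
inverse of `a - z` modulo compact operators. But `a - z` has an approximate kernel: normalised
truncations of the formal eigenvector `∑ zⁱ eᵢ` over pairwise disjoint blocks of indices form an
orthonormal sequence `w` with `(a - z) w k → 0`. Up to a null sequence, `w` is then the image of a
bounded sequence under a compact operator, so it has a convergent subsequence, which an
orthonormal sequence cannot have.
-/

open Filter Topology Finset
open scoped InnerProductSpace

theorem not_tendsto_comp_of_pairwise_le_dist {γ : Type*} [PseudoMetricSpace γ] {ε : ℝ}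
    (hε : 0 < ε) {w : ℕ → γ} (hw : Pairwise fun j k => ε ≤ dist (w j) (w k))
    {φ : ℕ → ℕ} (hφ : StrictMono φ) (x : γ) : ¬ Tendsto (w ∘ φ) atTop (𝓝 x) := by
  intro h
  obtain ⟨N, hN⟩ := Metric.cauchySeq_iff'.mp h.cauchySeq ε hε
  exact (hw (hφ N.lt_succ_self).ne').not_gt (hN (N + 1) N.le_succ)

theorem not_isCompactOperator_one_sub_mul {𝕜 E : Type*} [NontriviallyNormedField 𝕜]
    [NormedAddCommGroup E] [NormedSpace 𝕜 E] {T : E →L[𝕜] E} (C : E →L[𝕜] E) {w : ℕ → E}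
    {r ε : ℝ} (hε : 0 < ε) (hw_le : ∀ k, ‖w k‖ ≤ r)
    (hw_sep : Pairwise fun j k => ε ≤ dist (w j) (w k))
    (hTw : Tendsto (fun k => T (w k)) atTop (𝓝 0)) :
    ¬ IsCompactOperator ⇑(1 - C * T) := by
  intro hK
  obtain ⟨S, hS, hKS⟩ := IsCompactOperator.image_closedBall_subset_compact
    (f := (1 - C * T : E →L[𝕜] E).toLinearMap) hK r
  obtain ⟨x, -, φ, hφ, hKw⟩ :=
    hS.tendsto_subseq fun k => hKS ⟨w k, by simpa using hw_le k, rfl⟩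
  have hCTw : Tendsto (fun k => C (T (w k))) atTop (𝓝 0) := by
    simpa [Function.comp_def] using (C.continuous.tendsto 0).comp hTw
  -- `w = (1 - C T) w + C T w`, and the second summand tends to zero
  refine not_tendsto_comp_of_pairwise_le_dist hε hw_sep hφ x ?_
  simpa [Function.comp_def] using hKw.add (hCTw.comp hφ.tendsto_atTop)

theorem Orthonormal.pairwise_one_le_dist {𝕜 E ι : Type*} [RCLike 𝕜] [NormedAddCommGroup E]
    [InnerProductSpace 𝕜 E] {v : ι → E} (hv : Orthonormal 𝕜 v) :
    Pairwise fun i j => 1 ≤ dist (v i) (v j) := by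
  intro i j hij
  have hsq : dist (v i) (v j) ^ 2 = 2 := by
    rw [dist_eq_norm, @norm_sub_sq 𝕜, hv.inner_eq_zero hij, hv.norm_eq_one, hv.norm_eq_one]
    norm_num
  nlinarith [dist_nonneg (x := v i) (y := v j)]

def geomBlock {R M : Type*} [Semiring R] [AddCommMonoid M] [Module R M]
    (v : ℕ → M) (z : R) (n L : ℕ) : M :=
  ∑ i ∈ range L, z ^ (n + i) • v (n + i)

theorem geomBlock_succ {R M : Type*} [Semiring R] [AddCommMonoid M] [Module R M]
    (v : ℕ → M) (z : R) (n L : ℕ) :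
    geomBlock v z n (L + 1) = geomBlock v z n L + z ^ (n + L) • v (n + L) :=
  sum_range_succ _ _

theorem map_geomBlock_sub_smul {R M F : Type*} [CommRing R] [AddCommGroup M] [Module R M]
    [FunLike F M M] [LinearMapClass F R M M] {T : F} {v : ℕ → M}
    (hT : ∀ n, T (v (n + 1)) = v n) (z : R) (n L : ℕ) :
    T (geomBlock v z (n + 1) L) - z • geomBlock v z (n + 1) L =
      z ^ (n + 1) • v n - z ^ (n + L + 1) • v (n + L) := by
  induction L with
  | zero => simp [geomBlock]
  | succ L ih =>
    rw [geomBlock_succ, map_add, map_smul, smul_add, smul_smul, ← pow_succ',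
      show n + 1 + L = n + L + 1 by omega, hT, add_sub_add_comm, ih]
    exact sub_add_sub_cancel _ _ _

section InnerProduct

variable {𝕜 E : Type*} [RCLike 𝕜] [NormedAddCommGroup E] [InnerProductSpace 𝕜 E]
  {v : ℕ → E} {z : 𝕜}

theorem Orthonormal.norm_geomBlock_sq (hv : Orthonormal 𝕜 v) (hz : ‖z‖ = 1) (n L : ℕ) :
    ‖geomBlock v z n L‖ ^ 2 = L := by
  have hinj : Function.Injective fun i => n + i := fun i j h => by simpa using h
  have := (hv.comp _ hinj).inner_sum (fun i => z ^ (n + i)) (fun i => z ^ (n + i)) (range L)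
  simp only [Function.comp_apply] at this
  rw [@norm_sq_eq_re_inner 𝕜, geomBlock, this]
  simp_rw [RCLike.conj_mul, norm_pow, hz]
  simp

theorem Orthonormal.inner_geomBlock_eq_zero (hv : Orthonormal 𝕜 v) {n n' : ℕ} (L L' : ℕ)
    (h : n + L ≤ n') : ⟪geomBlock v z n L, geomBlock v z n' L'⟫_𝕜 = 0 := by
  rw [geomBlock, geomBlock, sum_inner]
  refine sum_eq_zero fun i hi => ?_
  rw [inner_sum]
  refine sum_eq_zero fun j _ => ?_
  rw [inner_smul_left, inner_smul_right, hv.inner_eq_zero (by simp at hi; omega), mul_zero,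
    mul_zero]

end InnerProduct

-- The blocks `[(k+1)², (k+1)² + k]` are pairwise disjoint, and `T - z` only sees the two ends of
-- a block, while the block itself has norm `√(k + 1)`.
noncomputable def approxEigenvector {𝕜 E : Type*} [RCLike 𝕜] [AddCommMonoid E] [Module 𝕜 E]
    (v : ℕ → E) (z : 𝕜) (k : ℕ) : E :=
  ((√(k + 1))⁻¹ : 𝕜) • geomBlock v z ((k + 1) ^ 2) (k + 1)

theorem tendsto_sub_smul_one_approxEigenvector {𝕜 E : Type*} [RCLike 𝕜] [NormedAddCommGroup E]
    [NormedSpace 𝕜 E] {v : ℕ → E} {z : 𝕜} {T : E →L[𝕜] E} (hT : ∀ n, T (v (n + 1)) = v n)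
    (hv : ∀ n, ‖v n‖ = 1) (hz : ‖z‖ = 1) :
    Tendsto (fun k => (T - z • 1) (approxEigenvector v z k)) atTop (𝓝 0) := by
  have hbound (k : ℕ) : ‖(T - z • 1) (approxEigenvector v z k)‖ ≤ 2 * (√(k + 1))⁻¹ := by
    rw [approxEigenvector, map_smul, sub_apply, smul_apply, one_apply_eq_self,
      show (k + 1) ^ 2 = k * (k + 2) + 1 by ring, map_geomBlock_sub_smul hT, norm_smul,
      norm_inv, RCLike.norm_ofReal, abs_of_nonneg (Real.sqrt_nonneg _), mul_comm]
    gcongr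
    refine (norm_sub_le _ _).trans_eq ?_
    rw [norm_smul, norm_smul, norm_pow, norm_pow, hz, hv, hv]
    norm_num
  refine squeeze_zero_norm hbound ?_
  simpa using ((tendsto_inv_atTop_zero.comp Real.tendsto_sqrt_atTop).comp
    (tendsto_natCast_atTop_atTop.atTop_add tendsto_const_nhds)).const_mul 2

theorem orthonormal_approxEigenvector {𝕜 E : Type*} [RCLike 𝕜] [NormedAddCommGroup E]
    [InnerProductSpace 𝕜 E] {v : ℕ → E} {z : 𝕜} (hv : Orthonormal 𝕜 v) (hz : ‖z‖ = 1) :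
    Orthonormal 𝕜 (approxEigenvector v z) := by
  have hinner {j k : ℕ} (hjk : j < k) :
      ⟪approxEigenvector v z j, approxEigenvector v z k⟫_𝕜 = 0 := by
    rw [approxEigenvector, approxEigenvector, inner_smul_left, inner_smul_right,
      hv.inner_geomBlock_eq_zero _ _ (by nlinarith), mul_zero, mul_zero]
  refine ⟨fun k => ?_, fun j k hjk => hjk.lt_or_gt.elim hinner
    fun h => inner_eq_zero_symm.mp (hinner h)⟩
  have hnorm : ‖geomBlock v z ((k + 1) ^ 2) (k + 1)‖ = √(k + 1) := by
    rw [← Real.sqrt_sq (norm_nonneg _), hv.norm_geomBlock_sq hz]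
    push_cast; rfl
  rw [approxEigenvector, norm_smul, hnorm, norm_inv, RCLike.norm_ofReal,
    abs_of_nonneg (Real.sqrt_nonneg _)]
  exact inv_mul_cancel₀ (by positivity)

theorem orthonormal_e : Orthonormal ℂ e := by
  classical
  rw [orthonormal_iff_ite]
  intro i j
  simp [e, lp.inner_single_left, Pi.single_apply]

theorem aeval_shift_not_fredholm_general (a : ℓ2 →L[ℂ] ℓ2) (ha : IsUnilateralShift a)
    (p : Polynomial ℂ)
    (hroot : ∃ z : ℂ, ‖z‖ = 1 ∧ p.IsRoot z) :
    ¬ _root_.IsFredholm (Polynomial.aeval a p) := by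
  obtain ⟨z, hz, hpz⟩ := hroot
  obtain ⟨q, rfl⟩ := Polynomial.dvd_iff_isRoot.mpr hpz
  rintro ⟨B, -, hB⟩
  have hfactor : Polynomial.aeval a ((Polynomial.X - Polynomial.C z) * q) =
      Polynomial.aeval a q * (a - z • 1) := by
    simp [mul_comm _ q, Algebra.algebraMap_eq_smul_one]
  have hw := orthonormal_approxEigenvector orthonormal_e hz
  refine not_isCompactOperator_one_sub_mul (B * Polynomial.aeval a q) one_pos
    (fun k => (hw.norm_eq_one k).le) hw.pairwise_one_le_dist
    (tendsto_sub_smul_one_approxEigenvector ha.2 orthonormal_e.norm_eq_one hz) ?_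
  rwa [mul_assoc, ← hfactor]

/-- If a complex polynomial `p` of degree at most `n` has a root on
the unit circle, then `A = p(a)` is not Fredholm. -/
theorem aeval_shift_not_fredholm (a : ℓ2 →L[ℂ] ℓ2) (ha : IsUnilateralShift a)
    (n : ℕ) (p : Polynomial ℂ) (hdeg : p.natDegree ≤ n)
    (hroot : ∃ z : ℂ, ‖z‖ = 1 ∧ p.IsRoot z) :
    ¬ _root_.IsFredholm (Polynomial.aeval a p) :=
  aeval_shift_not_fredholm_general a ha p hroot
end
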